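/- arXiv:1504.02613 — 3 statements merged into one kernel-verified Lean document; each statement's English description precedes it below -/
import Mathlib

section
/- Restriction on NH-graphs commutes with itself and interacts correctly with parallel composition: (x)(y)⟨η,G⟩ = (y)(x)⟨η,G⟩, and if x ∉ img(η₂) then (x)(⟨η₁,G₁⟩ ∥ ⟨η₂,G₂⟩) ≅ ((x)⟨η₁,G₁⟩) ∥ ⟨η₂,G₂⟩ (scope extension holds for NH-graphs). -/
/-- A labeled (nominal) hypergraph: vertices, hyperedges with attached vertex
tuples and labels, and a partial naming function from vertices to names. -/
structure NHGraph (L : Type) where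
  V : Type
  E : Type
  att : E → List V
  lab : E → L
  nm : V → Option ℕ

namespace NHGraph

variable {L : Type}

/-- The naming function is a partial injection. -/
def InjNm (G : NHGraph L) : Prop :=
  ∀ v w x, G.nm v = some x → G.nm w = some x → v = w

/-- The hypergraph has no isolated vertices. -/
def NoIsolated (G : NHGraph L) : Prop :=
  ∀ v, ∃ e, v ∈ G.att e

/-- The interface: the set of names assigned to some vertex. -/
def interface (G : NHGraph L) : Set ℕ := {x | ∃ v, G.nm v = some x}

/-- Isomorphism of NH-graphs: a hypergraph isomorphism preserving labels and names. -/
def Iso (G₁ G₂ : NHGraph L) : Prop :=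
  ∃ (f : G₁.V ≃ G₂.V) (g : G₁.E ≃ G₂.E),
    (∀ e, G₂.att (g e) = (G₁.att e).map f) ∧
    (∀ e, G₂.lab (g e) = G₁.lab e) ∧
    (∀ v, G₂.nm (f v) = G₁.nm v)

/-- Action of a name permutation: rename the interface. -/
def permAct (G : NHGraph L) (π : Equiv.Perm ℕ) : NHGraph L :=
  { G with nm := fun v => (G.nm v).map π }

/-- Restriction: remove the name x from the interface. -/
def res (x : ℕ) (G : NHGraph L) : NHGraph L :=
  { G with nm := fun v => if G.nm v = some x then none else G.nm v }

/-- A vertex of G₂ shares an interface name with some vertex of G₁. -/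
def Shared (G₁ G₂ : NHGraph L) (v₂ : G₂.V) : Prop :=
  ∃ (v₁ : G₁.V) (x : ℕ), G₁.nm v₁ = some x ∧ G₂.nm v₂ = some x

open Classical in
/-- Parallel composition: disjoint union, gluing vertices with the same interface name. -/
noncomputable def par (G₁ G₂ : NHGraph L) : NHGraph L where
  V := {v : G₁.V ⊕ G₂.V // Sum.elim (fun _ => True) (fun v₂ => ¬ Shared G₁ G₂ v₂) v}
  E := G₁.E ⊕ G₂.E
  att := fun e =>
    Sum.elim
      (fun e₁ => (G₁.att e₁).map (fun v₁ =>
        (⟨Sum.inl v₁, trivial⟩ : {v : G₁.V ⊕ G₂.V // Sum.elim (fun _ => True) (fun v₂ => ¬ Shared G₁ G₂ v₂) v})))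
      (fun e₂ => (G₂.att e₂).map (fun v₂ =>
        if h : Shared G₁ G₂ v₂ then ⟨Sum.inl h.choose, trivial⟩ else ⟨Sum.inr v₂, h⟩)) e
  lab := Sum.elim G₁.lab G₂.lab
  nm := fun v => Sum.elim G₁.nm G₂.nm v.val

/-- The empty NH-graph (interpretation of nil). -/
def zero (L : Type) : NHGraph L :=
  ⟨Empty, Empty, fun e => e.elim, fun e => e.elim, fun v => v.elim⟩

end NHGraph

/-- The NH-graph denoted by an atomic term: one hyperedge with named vertices. -/
def atomG (A : ℕ) (xs : List ℕ) : NHGraph ℕ :=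
  ⟨Fin xs.length, Unit, fun _ => List.finRange xs.length, fun _ => A,
    fun i => some (xs.get i)⟩


/-!
Restriction only rewrites the naming function, so two restrictions commute pointwise.
For scope extension, a vertex of `G₁` named `x` can never be glued to a vertex of `G₂`
when `x ∉ G₂.interface`; hence restricting `G₁` before composing changes neither which
vertices of `G₂` are glued nor the vertices they are glued to, and the identity on the
underlying disjoint union is an isomorphism.
-/

theorem Exists.choose_congr {α : Sort*} {p q : α → Prop} (hpq : p = q)
    (hp : ∃ a, p a) (hq : ∃ a, q a) : hp.choose = hq.choose := by
  subst hpq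
  rfl

namespace NHGraph

variable {L : Type}

theorem res_nm (x : ℕ) (G : NHGraph L) (v : G.V) :
    (res x G).nm v = if G.nm v = some x then none else G.nm v := rfl

theorem res_nm_eq_some_iff (x c : ℕ) (G : NHGraph L) (v : G.V) :
    (res x G).nm v = some c ↔ G.nm v = some c ∧ c ≠ x := by
  rw [res_nm]
  split_ifs with h <;> grind

theorem res_comm (x y : ℕ) (G : NHGraph L) : res x (res y G) = res y (res x G) := by
  simp only [res, mk.injEq, heq_eq_eq, true_and]
  funext v
  split_ifs <;> simp_all

section ScopeExtension

variable {x : ℕ} {G₂ : NHGraph L}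

/-- The predicate whose witness `par` chooses to glue `v₂` is unchanged by restricting
the left component. -/
theorem gluing_witness_res_left (hx : x ∉ G₂.interface) (G₁ : NHGraph L) (v₂ : G₂.V) :
    (fun v₁ : G₁.V => ∃ c, (res x G₁).nm v₁ = some c ∧ G₂.nm v₂ = some c) =
      fun v₁ => ∃ c, G₁.nm v₁ = some c ∧ G₂.nm v₂ = some c := by
  funext v₁
  refine propext (exists_congr fun c => ?_)
  rw [res_nm_eq_some_iff]
  constructor
  · exact fun ⟨⟨h₁, _⟩, h₂⟩ => ⟨h₁, h₂⟩
  · rintro ⟨h₁, h₂⟩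
    exact ⟨⟨h₁, by rintro rfl; exact hx ⟨v₂, h₂⟩⟩, h₂⟩

theorem shared_res_left (hx : x ∉ G₂.interface) (G₁ : NHGraph L) :
    Shared (res x G₁) G₂ = Shared G₁ G₂ :=
  funext fun v₂ => congrArg Exists (gluing_witness_res_left hx G₁ v₂)

theorem res_par_iso_par_res (hx : x ∉ G₂.interface) (G₁ : NHGraph L) :
    (res x (G₁.par G₂)).Iso ((res x G₁).par G₂) := by
  have hshared := shared_res_left hx G₁
  have hV : ∀ v : G₁.V ⊕ G₂.V,
      Sum.elim (fun _ => True) (fun v₂ => ¬ Shared G₁ G₂ v₂) v ↔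
        Sum.elim (fun _ => True) (fun v₂ => ¬ Shared (res x G₁) G₂ v₂) v := by
    simp [hshared]
  refine ⟨Equiv.subtypeEquivRight hV, Equiv.refl _, ?_, fun _ => rfl, ?_⟩
  · rintro (e₁ | e₂)
    · change List.map _ (G₁.att e₁) = List.map _ (List.map _ (G₁.att e₁))
      refine Eq.trans ?_ (List.map_map ..).symm
      rfl
    · change List.map _ (G₂.att e₂) = List.map _ (List.map _ (G₂.att e₂))
      refine Eq.trans ?_ (List.map_map ..).symm
      refine List.map_congr_left fun v₂ _ => ?_
      show _ = Equiv.subtypeEquivRight hV _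
      beta_reduce
      by_cases h : Shared G₁ G₂ v₂
      · have h' : Shared (res x G₁) G₂ v₂ := hshared ▸ h
        rw [dif_pos h, dif_pos h']
        exact Subtype.ext (congrArg Sum.inl
          (Exists.choose_congr (gluing_witness_res_left hx G₁ v₂) h' h))
      · rw [dif_neg h, dif_neg (hshared ▸ h)]
        rfl
  · rintro ⟨v₁ | v₂, _⟩
    · rfl
    · exact (if_neg fun h => hx ⟨v₂, h⟩).symm

end ScopeExtension

end NHGraph

theorem res_comm_and_scopeExt_general {L : Type} (x y : ℕ) (G G₁ G₂ : NHGraph L)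
    (hx : x ∉ G₂.interface) :
    NHGraph.res x (NHGraph.res y G) = NHGraph.res y (NHGraph.res x G) ∧
    (NHGraph.res x (G₁.par G₂)).Iso ((NHGraph.res x G₁).par G₂) :=
  ⟨NHGraph.res_comm x y G, NHGraph.res_par_iso_par_res hx G₁⟩

/-- restriction on NH-graphs commutes with itself, and scope
extension holds: if x is not in the interface of G₂ then
(x)(G₁ ∥ G₂) ≅ ((x)G₁) ∥ G₂. -/
theorem res_comm_and_scopeExt {L : Type} (x y : ℕ) (G G₁ G₂ : NHGraph L)
    (h₁ : G₁.InjNm) (h₂ : G₂.InjNm) (hx : x ∉ G₂.interface) :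
    NHGraph.res x (NHGraph.res y G) = NHGraph.res y (NHGraph.res x G) ∧
    (NHGraph.res x (G₁.par G₂)).Iso ((NHGraph.res x G₁).par G₂) :=
  res_comm_and_scopeExt_general x y G G₁ G₂ hx
end

section
/- Any canonical form of a term has complexity at most that of its normal form: if n is a normal form and c is obtained from n by repeatedly applying scope extension (x)(p∥q) → (x)p ∥ q (for x ∉ fn(q)) until no longer possible, then cpl(c) ≤ cpl(n). -/
/-- Hierarchical optimization terms: p ::= p∥q | (x)p | A(x̃) | nil. -/
inductive HTerm where
  | par : HTerm → HTerm → HTerm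
  | res : ℕ → HTerm → HTerm
  | atom : ℕ → List ℕ → HTerm
  | nil : HTerm

/-- Free names of a hierarchical term. -/
def HTerm.fn : HTerm → Finset ℕ
  | .par p q => p.fn ∪ q.fn
  | .res x p => p.fn.erase x
  | .atom _ xs => xs.toFinset
  | .nil => ∅

/-- Complexity measure on hierarchical terms. -/
def HTerm.cpl : HTerm → ℕ
  | .par p q => max (max p.cpl q.cpl) (HTerm.fn (.par p q)).card
  | .res _ p => p.cpl
  | .atom _ xs => xs.toFinset.card
  | .nil => 0

/-- Parallel compositions of atomic terms. -/
inductive HTerm.AtomPar : HTerm → Prop where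
  | atom (A xs) : AtomPar (.atom A xs)
  | par : AtomPar p → AtomPar q → AtomPar (.par p q)

/-- Normal form: restrictions (on names free in the body) applied to a parallel
composition of atomic terms. -/
inductive HTerm.NormalForm : HTerm → Prop where
  | base : HTerm.AtomPar p → NormalForm p
  | res (x) : x ∈ HTerm.fn p → NormalForm p → NormalForm (.res x p)

/-- One step of left-to-right scope extension (x)(p∥q) → (x)p ∥ q for x ∉ fn(q),
applied anywhere in a term. -/
inductive SEStep : HTerm → HTerm → Prop where
  | scope (x p q) : x ∉ HTerm.fn q → SEStep (.res x (.par p q)) (.par (.res x p) q)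
  | parL : SEStep p p' → SEStep (.par p q) (.par p' q)
  | parR : SEStep q q' → SEStep (.par p q) (.par p q')
  | res (x) : SEStep p p' → SEStep (.res x p) (.res x p')

lemma SEStep.fn_subset_and_cpl_le {p p' : HTerm} (h : SEStep p p') :
    p'.fn ⊆ p.fn ∧ p'.cpl ≤ p.cpl := by
  induction h with
  | scope x p q hx =>
      constructor
      · intro y hy
        simp only [HTerm.fn, Finset.mem_union, Finset.mem_erase] at hy ⊢
        rcases hy with ⟨hy, hyp⟩ | hyq
        · exact ⟨hy, Or.inl hyp⟩
        · exact ⟨fun hxy => hx (hxy ▸ hyq), Or.inr hyq⟩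
      · simp only [HTerm.cpl, HTerm.fn]
        apply max_le (max_le (le_max_of_le_left (le_max_left _ _))
          (le_max_of_le_left (le_max_right _ _)))
        apply le_max_of_le_right
        apply Finset.card_le_card
        intro y hy
        simp only [Finset.mem_union, Finset.mem_erase] at hy ⊢
        tauto
  | parL h ih =>
      refine ⟨Finset.union_subset_union_left ih.1, ?_⟩
      simp only [HTerm.cpl, HTerm.fn]
      exact max_le (max_le (le_max_of_le_left (ih.2.trans (le_max_left _ _)))
        (le_max_of_le_left (le_max_right _ _)))
        (le_max_of_le_right (Finset.card_le_card
          (Finset.union_subset_union_left ih.1)))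
  | parR h ih =>
      refine ⟨Finset.union_subset_union_right ih.1, ?_⟩
      simp only [HTerm.cpl, HTerm.fn]
      exact max_le (max_le (le_max_of_le_left (le_max_left _ _))
        (le_max_of_le_left (ih.2.trans (le_max_right _ _))))
        (le_max_of_le_right (Finset.card_le_card
          (Finset.union_subset_union_right ih.1)))
  | res x h ih =>
      exact ⟨Finset.erase_subset_erase x ih.1, ih.2⟩

/-- a canonical form, obtained from a normal form by repeatedly
applying scope extension until no longer possible, has complexity at most that
of the normal form. -/
theorem canonical_cpl_le_normal (n c : HTerm) (hn : n.NormalForm)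
    (hsteps : Relation.ReflTransGen SEStep n c) (hirred : ∀ d, ¬ SEStep c d) :
    c.cpl ≤ n.cpl := by
  clear hirred
  induction hsteps with
  | refl => exact le_refl _
  | tail _ h ih => exact (SEStep.fn_subset_and_cpl_le h).2.trans ih
end

section
/- Scope extension holds in the parking cost-function algebra: if x ∉ supp(ψ), then for all X ⊆ N, ((x)(φ ⊕ ψ))(X) = (((x)φ) ⊕ ψ)(X), where (φ ⊕ ψ)(X) = min over partitions X = X₁ ⊎ X₂ with X₁ ⊆ supp(φ), X₂ ⊆ supp(ψ) of φ(X₁)+ψ(X₂), ((x)φ)(X) = φ(X ∪ {x}), supp(φ⊕ψ) = (supp(φ) ∪ supp(ψ)), and supp((x)φ) = supp(φ)∖{x}. -/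
/-- A parking cost function: a map on finite sets of names together with a
designated finite support set. Compactness (f X = f (X ∩ S)) is stated as a
hypothesis where needed. -/
structure PCost where
  S : Finset ℕ
  f : Finset ℕ → EReal

namespace PCost

/-- Compactness: the function is determined by its support. -/
def Compact (φ : PCost) : Prop := ∀ X, φ.f X = φ.f (X ∩ φ.S)

/-- Parking parallel composition: (φ ⊕ ψ)(X) is the minimum of φ(X₁) + ψ(X₂)
over partitions X = X₁ ⊎ X₂ with X₁ ⊆ S_φ and X₂ ⊆ S_ψ (∞ if none exists);
its support is S_φ ∪ S_ψ. -/
noncomputable def par (φ ψ : PCost) : PCost where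
  S := φ.S ∪ ψ.S
  f := fun X =>
    ⨅ p : {p : Finset ℕ × Finset ℕ //
            p.1 ∪ p.2 = X ∧ Disjoint p.1 p.2 ∧ p.1 ⊆ φ.S ∧ p.2 ⊆ ψ.S},
      φ.f p.1.1 + ψ.f p.1.2

/-- The interpretation of nil: the constantly-zero cost function, empty support. -/
noncomputable def zero : PCost := ⟨∅, fun _ => 0⟩

/-- Parking restriction: ((x)φ)(X) = φ(X ∪ {x}), with support S_φ ∖ {x}. -/
def res (x : ℕ) (φ : PCost) : PCost := ⟨φ.S.erase x, fun X => φ.f (insert x X)⟩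

end PCost

/-! Restricting `x` away turns the splittings of `X ∪ {x}` into the splittings of `X`: as
`x ∉ S_ψ`, every such splitting puts `x` on the `φ` side, and erasing it there is inverse to
inserting it. -/

section Splits

variable {α : Type*} [DecidableEq α] {A B X : Finset α} {x : α} {p : Finset α × Finset α}

/-- The index set of the minimum defining `PCost.par`. -/
def Splits (A B X : Finset α) (p : Finset α × Finset α) : Prop :=
  p.1 ∪ p.2 = X ∧ Disjoint p.1 p.2 ∧ p.1 ⊆ A ∧ p.2 ⊆ B

theorem Splits.mem_fst (hxB : x ∉ B) (h : Splits A B (insert x X) p) : x ∈ p.1 := by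
  obtain ⟨hu, -, -, h2⟩ := h
  have hx : x ∈ p.1 ∪ p.2 := hu ▸ Finset.mem_insert_self x X
  exact (Finset.mem_union.mp hx).resolve_right fun h => hxB (h2 h)

theorem Splits.erase (hxB : x ∉ B) (hxX : x ∉ X) (h : Splits A B (insert x X) p) :
    Splits (A.erase x) B X (p.1.erase x, p.2) := by
  obtain ⟨hu, hd, h1, h2⟩ := h
  refine ⟨?_, hd.mono_left (Finset.erase_subset x p.1), Finset.erase_subset_erase x h1, h2⟩
  rw [← Finset.erase_insert hxX, ← hu, Finset.erase_union_distrib,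
    Finset.erase_eq_of_notMem fun h => hxB (h2 h)]

theorem Splits.insert (hxA : x ∈ A) (hxB : x ∉ B) (h : Splits (A.erase x) B X p) :
    Splits A B (insert x X) (insert x p.1, p.2) := by
  obtain ⟨hu, hd, h1, h2⟩ := h
  refine ⟨?_, Finset.disjoint_insert_left.mpr ⟨fun h => hxB (h2 h), hd⟩,
    Finset.insert_subset hxA (h1.trans (Finset.erase_subset x A)), h2⟩
  rw [Finset.insert_union, hu]

def splitsInsertEquiv (hxA : x ∈ A) (hxB : x ∉ B) (hxX : x ∉ X) :
    {p // Splits A B (insert x X) p} ≃ {q // Splits (A.erase x) B X q} where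
  toFun p := ⟨(p.1.1.erase x, p.1.2), p.2.erase hxB hxX⟩
  invFun q := ⟨(insert x q.1.1, q.1.2), q.2.insert hxA hxB⟩
  left_inv p := by
    ext1
    simp only [Finset.insert_erase (p.2.mem_fst hxB)]
  right_inv q := by
    ext1
    simp only [Finset.erase_insert fun h => Finset.notMem_erase x A (q.2.2.2.1 h)]

end Splits

theorem parking_scopeExt_general (φ ψ : PCost)
    (x : ℕ) (hxψ : x ∉ ψ.S) (hxφ : x ∈ φ.S)
    (X : Finset ℕ) (hX : X ⊆ (φ.S ∪ ψ.S).erase x) :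
    (PCost.res x (φ.par ψ)).f X = ((PCost.res x φ).par ψ).f X := by
  have hxX : x ∉ X := fun h => Finset.notMem_erase x _ (hX h)
  refine (splitsInsertEquiv hxφ hxψ hxX).iInf_congr fun p => ?_
  simp only [PCost.res, splitsInsertEquiv, Equiv.coe_fn_mk, Finset.insert_erase (p.2.mem_fst hxψ)]

/-- scope extension holds in the parking cost-function algebra:
if x ∉ supp(ψ) (with x ∈ supp(φ) and X ⊆ (supp(φ) ∪ supp(ψ)) ∖ {x}), then
((x)(φ ⊕ ψ))(X) = (((x)φ) ⊕ ψ)(X). -/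
theorem parking_scopeExt (φ ψ : PCost) (hφ : φ.Compact) (hψ : ψ.Compact)
    (x : ℕ) (hxψ : x ∉ ψ.S) (hxφ : x ∈ φ.S)
    (X : Finset ℕ) (hX : X ⊆ (φ.S ∪ ψ.S).erase x) :
    (PCost.res x (φ.par ψ)).f X = ((PCost.res x φ).par ψ).f X :=
  parking_scopeExt_general φ ψ x hxψ hxφ X hX
end
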